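/- Let f : X → Y be a continuous function between subspaces X, Y of the Cantor set such that f maps every discrete subset of X to a resolvable subset of Y. Then f is piecewise open. -/

import Mathlib

open Set Topology

abbrev Cantor : Type := ℕ → Bool

def Resolvable {T : Type*} [TopologicalSpace T] (E : Set T) : Prop :=
  ∀ F : Set T, IsClosed F → F.Nonempty → closure (F ∩ E) ∩ closure (F \ E) ≠ F

def OpenOntoImage {X Y : Type*} [TopologicalSpace X] [TopologicalSpace Y]
    (f : X → Y) (S : Set X) : Prop :=
  ∀ U : Set X, IsOpen U → ∃ V : Set Y, IsOpen V ∧ f '' (U ∩ S) = V ∩ f '' S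

/-- `D` is a discrete subset: every point of `D` is isolated in `D`. -/
def IsDiscreteSubset {X : Type*} [TopologicalSpace X] (D : Set X) : Prop :=
  ∀ x ∈ D, ∃ U : Set X, IsOpen U ∧ U ∩ D = {x}

/-!
Fix a countable clopen basis of `X`. The union `G` of the basic sets on which `f` is piecewise
open is again such a set, so either `G = X`, or on the nonempty set `A = X \ G` the map `f` is
open on no nonempty relatively open subset of `A`. In the second case, since `f` fails to be open
near every point of `A`, one grows an infinitely branching tree of points `x_s ∈ A`: each `f x_s`
is the limit of the images of the children of `x_s`, which are chosen outside a clopen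
neighbourhood of `x_s` and are mapped into pairwise disjoint shells around `f x_s`. The points
`x_s` form a discrete set on which `f` is injective, and the children of even index form a
discrete `D` such that `f '' D` and its complement are both dense in the image of the tree, so
`f '' D` is not resolvable.
-/

open Function Filter TopologicalSpace

section PiecewiseOpen

variable {α β : Type*} [TopologicalSpace α] [TopologicalSpace β] {f : α → β}

def PiecewiseOpenOn (f : α → β) (S : Set α) : Prop :=
  ∃ C : ℕ → Set α, (∀ n, IsClosed (C n)) ∧ Pairwise (Disjoint on C) ∧ ⋃ n, C n = S ∧
    ∀ n, OpenOntoImage f (C n)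

theorem openOntoImage_empty (f : α → β) : OpenOntoImage f ∅ :=
  fun _ _ => ⟨∅, isOpen_empty, by simp⟩

theorem OpenOntoImage.inter_isOpen {S G : Set α} (hS : OpenOntoImage f S) (hG : IsOpen G) :
    OpenOntoImage f (S ∩ G) := by
  intro U hU
  obtain ⟨V, hV, hVS⟩ := hS (U ∩ G) (hU.inter hG)
  refine ⟨V, hV, ?_⟩
  ext y
  constructor
  · rintro ⟨x, ⟨hxU, hxS, hxG⟩, rfl⟩
    have hfx : f x ∈ f '' (U ∩ G ∩ S) := ⟨x, ⟨⟨hxU, hxG⟩, hxS⟩, rfl⟩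
    exact ⟨(hVS ▸ hfx).1, x, ⟨hxS, hxG⟩, rfl⟩
  · rintro ⟨hyV, x, ⟨hxS, -⟩, rfl⟩
    have hfx : f x ∈ V ∩ f '' S := ⟨hyV, x, hxS, rfl⟩
    obtain ⟨x', ⟨⟨hx'U, hx'G⟩, hx'S⟩, hx'x⟩ := hVS ▸ hfx
    exact ⟨x', ⟨hx'U, hx'S, hx'G⟩, hx'x⟩

theorem exists_mem_closure_of_not_openOntoImage {S : Set α} (h : ¬ OpenOntoImage f S) :
    ∃ U, IsOpen U ∧ ∃ x ∈ U ∩ S, f x ∈ closure (f '' S \ f '' (U ∩ S)) := by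
  contrapose! h
  refine fun U hU => ⟨(closure (f '' S \ f '' (U ∩ S)))ᶜ, isClosed_closure.isOpen_compl, ?_⟩
  ext y
  constructor
  · rintro ⟨x, hx, rfl⟩
    exact ⟨h U hU x hx, x, hx.2, rfl⟩
  · rintro ⟨hy, hyS⟩
    by_contra hyU
    exact hy (subset_closure ⟨hyS, hyU⟩)

theorem piecewiseOpenOn_iUnion_of_countable {ι : Type*} [Countable ι] {C : ι → Set α}
    (hC : ∀ i, IsClosed (C i)) (hd : Pairwise (Disjoint on C)) (ho : ∀ i, OpenOntoImage f (C i)) :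
    PiecewiseOpenOn f (⋃ i, C i) := by
  obtain ⟨e, he⟩ := Countable.exists_injective_nat ι
  have hext : ∀ n, (∃ i, extend e C ⊥ n = C i) ∨ extend e C ⊥ n = ∅ := by
    intro n
    by_cases hn : ∃ i, e i = n
    · obtain ⟨i, rfl⟩ := hn
      exact .inl ⟨i, he.extend_apply C ⊥ i⟩
    · exact .inr (extend_apply' C ⊥ n hn)
  refine ⟨extend e C ⊥, fun n => ?_, hd.disjoint_extend_bot (he.factorsThrough _),
    iSup_extend_bot he C, fun n => ?_⟩ <;> obtain ⟨i, hi⟩ | hn := hext n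
  exacts [hi ▸ hC i, hn ▸ isClosed_empty, hi ▸ ho i, hn ▸ openOntoImage_empty f]

theorem OpenOntoImage.piecewiseOpenOn {S : Set α} (h : OpenOntoImage f S) (hS : IsClosed S) :
    PiecewiseOpenOn f S := by
  simpa only [iUnion_const] using piecewiseOpenOn_iUnion_of_countable (ι := Unit) (fun _ => hS)
    (fun i j hij => absurd (Subsingleton.elim i j) hij) (fun _ => h)

theorem PiecewiseOpenOn.iUnion {ι : Type*} [Countable ι] {B : ι → Set α}
    (hd : Pairwise (Disjoint on B)) (h : ∀ i, PiecewiseOpenOn f (B i)) :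
    PiecewiseOpenOn f (⋃ i, B i) := by
  choose C hC hCd hCB hCo using h
  have hsub : ∀ i n, C i n ⊆ B i := fun i n => hCB i ▸ subset_iUnion (C i) n
  convert piecewiseOpenOn_iUnion_of_countable (C := fun p : ι × ℕ => C p.1 p.2)
    (fun p => hC p.1 p.2) ?_ (fun p => hCo p.1 p.2) using 1
  · simp only [iUnion_prod', hCB]
  · rintro ⟨i, m⟩ ⟨j, n⟩ hne
    by_cases hij : i = j
    · subst hij
      exact hCd i (fun hmn => hne (Prod.ext rfl hmn))
    · exact (hd hij).mono (hsub i m) (hsub j n)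

theorem PiecewiseOpenOn.union {S T : Set α} (hS : PiecewiseOpenOn f S) (hT : PiecewiseOpenOn f T)
    (hST : Disjoint S T) : PiecewiseOpenOn f (S ∪ T) := by
  rw [union_eq_iUnion]
  refine PiecewiseOpenOn.iUnion (fun i j hij => ?_) (fun b => ?_)
  · cases i <;> cases j <;> simp_all [onFun, hST.symm]
  · cases b <;> assumption

theorem PiecewiseOpenOn.inter_isClopen {S G : Set α} (hS : PiecewiseOpenOn f S) (hG : IsClopen G) :
    PiecewiseOpenOn f (S ∩ G) := by
  obtain ⟨C, hC, hCd, hCS, hCo⟩ := hS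
  refine ⟨fun n => C n ∩ G, fun n => (hC n).inter hG.isClosed,
    fun m n hmn => (hCd hmn).mono inter_subset_left inter_subset_left, ?_,
    fun n => (hCo n).inter_isOpen hG.isOpen⟩
  rw [← iUnion_inter, hCS]

theorem piecewiseOpenOn_iUnion_of_isClopen {B : ℕ → Set α} (hB : ∀ n, IsClopen (B n))
    (h : ∀ n, PiecewiseOpenOn f (B n)) : PiecewiseOpenOn f (⋃ n, B n) := by
  rw [← iUnion_disjointed]
  refine PiecewiseOpenOn.iUnion (disjoint_disjointed B) fun n => ?_
  rw [disjointed_eq_inter_compl]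
  exact (h n).inter_isClopen ((finite_lt_nat n).isClopen_biInter fun j _ => (hB j).compl)

end PiecewiseOpen

section Dichotomy

variable {α β : Type*} [TopologicalSpace α] [TopologicalSpace β] {f : α → β}

def NowhereOpenOn (f : α → β) (A : Set α) : Prop :=
  ∀ U, IsOpen U → (A ∩ U).Nonempty → ¬ OpenOntoImage f (A ∩ U)

/-- Let `G` be the union of the basic sets on which `f` is piecewise open. A basic set meeting
`Gᶜ` in a set on which `f` is open would split into that set and its part in `G`, hence lie
in `G`. -/
theorem piecewiseOpenOn_univ_or_exists_nowhereOpenOn {B : ℕ → Set α}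
    (hB : ∀ n, IsClopen (B n)) (hbasis : ∀ x U, IsOpen U → x ∈ U → ∃ n, x ∈ B n ∧ B n ⊆ U) :
    PiecewiseOpenOn f univ ∨ ∃ A, A.Nonempty ∧ NowhereOpenOn f A := by
  classical
  let G : ℕ → Set α := fun n => if PiecewiseOpenOn f (B n) then B n else ∅
  have hG : PiecewiseOpenOn f (⋃ n, G n) := by
    refine piecewiseOpenOn_iUnion_of_isClopen (fun n => ?_) (fun n => ?_) <;> simp only [G] <;>
      split_ifs with hn
    exacts [hB n, isClopen_empty, hn, (openOntoImage_empty f).piecewiseOpenOn isClosed_empty]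
  by_cases hU : ⋃ n, G n = univ
  · exact Or.inl (hU ▸ hG)
  refine Or.inr ⟨(⋃ n, G n)ᶜ, nonempty_compl.mpr hU, fun U hU hne hopen => ?_⟩
  obtain ⟨x, hxG, hxU⟩ := hne
  obtain ⟨n, hxn, hnU⟩ := hbasis x U hU hxU
  have hGo : IsOpen (⋃ n, G n) := isOpen_iUnion fun m => by
    simp only [G]; split_ifs
    exacts [(hB m).isOpen, isOpen_empty]
  have hn : PiecewiseOpenOn f (B n) := by
    have hopen' : OpenOntoImage f ((⋃ n, G n)ᶜ ∩ B n) := by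
      simpa only [inter_assoc, inter_eq_right.mpr hnU] using hopen.inter_isOpen (hB n).isOpen
    rw [← univ_inter (B n), ← compl_union_self (⋃ n, G n), union_inter_distrib_right]
    exact (hopen'.piecewiseOpenOn (hGo.isClosed_compl.inter (hB n).isClosed)).union
      (hG.inter_isClopen (hB n))
      (disjoint_compl_left.mono inter_subset_left inter_subset_left)
  exact hxG (mem_iUnion.mpr ⟨n, by simp only [G, hn, if_true]; exact hxn⟩)

end Dichotomy

theorem IsDiscreteSubset.mono {α : Type*} [TopologicalSpace α] {D D' : Set α}
    (hD : IsDiscreteSubset D) (h : D' ⊆ D) : IsDiscreteSubset D' := by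
  intro x hx
  obtain ⟨U, hU, hUD⟩ := hD x (h hx)
  have hxU : x ∈ U := (hUD ▸ mem_singleton x : x ∈ U ∩ D).1
  exact ⟨U, hU, subset_antisymm (hUD ▸ inter_subset_inter_right U h)
    (singleton_subset_iff.mpr ⟨hxU, hx⟩)⟩

theorem isDiscreteSubset_range {α ι : Type*} [TopologicalSpace α] {x : ι → α} {W : ι → Set α}
    (hW : ∀ i, IsOpen (W i)) (hxW : ∀ i, x i ∈ W i) (hsep : ∀ i j, i ≠ j → x j ∉ W i) :
    IsDiscreteSubset (range x) := by
  rintro _ ⟨i, rfl⟩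
  refine ⟨W i, hW i, subset_antisymm ?_ (singleton_subset_iff.mpr ⟨hxW i, i, rfl⟩)⟩
  rintro _ ⟨hj, j, rfl⟩
  by_contra hji
  exact hsep i j (fun hij => hji (hij ▸ rfl)) hj

theorem not_resolvable_of_subset_closure_inter_diff {β : Type*} [TopologicalSpace β]
    {T E : Set β} (hT : T.Nonempty) (hTE : T ⊆ closure (T ∩ E)) (hTE' : T ⊆ closure (T \ E)) :
    ¬ Resolvable E := by
  intro hE
  refine hE (closure T) isClosed_closure hT.closure (subset_antisymm
    (inter_subset_left.trans (closure_minimal inter_subset_left isClosed_closure))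
    (subset_inter ?_ ?_))
  · exact closure_minimal (hTE.trans (closure_mono (inter_subset_inter_left E subset_closure)))
      isClosed_closure
  · exact closure_minimal (hTE'.trans (closure_mono (sdiff_subset_sdiff_left subset_closure)))
      isClosed_closure

/-- Points of `T` whose distances to `p` strictly decrease to `0` are separated by the disjoint
shells `{z | d (2k+2) < dist z p < d (2k)}`. -/
theorem exists_seq_pairwise_disjoint_open_tendsto_of_mem_closure {β : Type*} [MetricSpace β]
    {T : Set β} {p : β} (hp : p ∈ closure T) (hpT : p ∉ T) :
    ∃ y : ℕ → β, ∃ V : ℕ → Set β, (∀ k, y k ∈ T ∩ V k) ∧ (∀ k, IsOpen (V k)) ∧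
      (∀ k, p ∉ V k) ∧ Pairwise (Disjoint on V) ∧ Tendsto V atTop (𝓝 p).smallSets := by
  have hglb : IsGLB ((dist · p) '' T) 0 := by
    refine ⟨by rintro _ ⟨y, -, rfl⟩; exact dist_nonneg, fun b hb => not_lt.mp fun hb0 => ?_⟩
    obtain ⟨y, hyT, hy⟩ := Metric.mem_closure_iff.mp hp b hb0
    exact (hb ⟨y, hyT, rfl⟩).not_gt (by rwa [dist_comm] at hy)
  have h0 : (0 : ℝ) ∉ (dist · p) '' T := by
    rintro ⟨y, hyT, hy⟩
    exact hpT (dist_eq_zero.mp hy ▸ hyT)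
  obtain ⟨d, hanti, hpos, hlim, hmem⟩ :=
    hglb.exists_seq_strictAnti_tendsto_of_notMem h0 ((closure_nonempty_iff.mp ⟨p, hp⟩).image _)
  choose y hyT hyd using hmem
  refine ⟨fun k => y (2 * k + 1), fun k => (dist · p) ⁻¹' Ioo (d (2 * k + 2)) (d (2 * k)),
    fun k => ⟨hyT _, ?_⟩, fun k => isOpen_Ioo.preimage (continuous_id.dist continuous_const),
    fun k hk => ?_, (pairwise_disjoint_on _).mpr fun m n hmn => ?_, ?_⟩
  · simp only [mem_preimage, hyd, mem_Ioo]
    exact ⟨hanti (by omega), hanti (by omega)⟩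
  · simp only [mem_preimage, dist_self, mem_Ioo] at hk
    exact (hpos _).not_gt hk.1
  · refine disjoint_left.mpr fun z hzm hzn => ?_
    have : d (2 * n) ≤ d (2 * m + 2) := hanti.antitone (by omega)
    simp only [mem_preimage, mem_Ioo] at hzm hzn
    linarith [hzm.1, hzn.2]
  · have hlim2 : Tendsto (fun k => d (2 * k)) atTop (𝓝 0) :=
      hlim.comp (tendsto_id.const_mul_atTop' two_pos)
    refine tendsto_smallSets_iff.mpr fun t ht => ?_
    obtain ⟨ε, hε, hεt⟩ := Metric.mem_nhds_iff.mp ht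
    filter_upwards [hlim2.eventually (gt_mem_nhds hε)] with k hk z hz
    exact hεt (lt_trans (mem_Ioo.mp hz).2 hk)

structure Node (α : Type*) where
  pt : α
  box : Set α
  core : Set α

namespace Node

section Tree

variable {α β : Type*} [TopologicalSpace α] [TopologicalSpace β] {f : α → β} {A : Set α}

/-- The closure condition says that `f` is not open at `pt` on `A ∩ box`, witnessed by the
neighbourhood `core`; it is what lets a node spawn children in `box \ core`. -/
structure IsGood (f : α → β) (A : Set α) (N : Node α) : Prop where
  pt_mem : N.pt ∈ A
  pt_mem_core : N.pt ∈ N.core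
  isClopen_core : IsClopen N.core
  core_subset_box : N.core ⊆ N.box
  isOpen_box : IsOpen N.box
  mem_closure : f N.pt ∈ closure (f '' (A ∩ N.box) \ f '' (A ∩ N.core))

structure IsChildFamily (f : α → β) (A : Set α) (N : Node α) (C : ℕ → Node α) : Prop where
  isGood : ∀ k, (C k).IsGood f A
  box_subset : ∀ k, (C k).box ⊆ N.box \ N.core
  notMem_image_box : ∀ k, f N.pt ∉ f '' (C k).box
  pairwise_disjoint_image_box : Pairwise (Disjoint on fun k => f '' (C k).box)
  tendsto_pt : Tendsto (fun k => f (C k).pt) atTop (𝓝 (f N.pt))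

def IsChildChoice (f : α → β) (A : Set α) (ch : Node α → ℕ → Node α) : Prop :=
  ∀ N : Node α, N.IsGood f A → N.IsChildFamily f A (ch N)

theorem exists_isGood (hα : IsTopologicalBasis {s : Set α | IsClopen s}) (hA : NowhereOpenOn f A)
    {O : Set α} (hO : IsOpen O) (hAO : (A ∩ O).Nonempty) :
    ∃ N : Node α, N.IsGood f A ∧ N.box = O := by
  obtain ⟨U, hU, x, ⟨hxU, hxA, hxO⟩, hx⟩ := exists_mem_closure_of_not_openOntoImage (hA O hO hAO)
  obtain ⟨W, hW, hxW, hWUO⟩ := hα.exists_subset_of_mem_open (u := U ∩ O) ⟨hxU, hxO⟩ (hU.inter hO)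
  refine ⟨⟨x, O, W⟩, ⟨hxA, hxW, hW, fun z hz => (hWUO hz).2, hO, closure_mono ?_ hx⟩, rfl⟩
  exact sdiff_subset_sdiff_right
    (image_mono fun z ⟨hzA, hzW⟩ => ⟨(hWUO hzW).1, hzA, (hWUO hzW).2⟩)

variable {ch : Node α → ℕ → Node α} {N : Node α}

theorem isGood_foldl (hch : IsChildChoice f A ch) (hN : N.IsGood f A) (s : List ℕ) :
    (s.foldl ch N).IsGood f A := by
  induction s generalizing N with
  | nil => exact hN
  | cons k s ih => exact ih ((hch N hN).isGood k)

theorem box_foldl_subset (hch : IsChildChoice f A ch) (hN : N.IsGood f A) (s : List ℕ) :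
    (s.foldl ch N).box ⊆ N.box := by
  induction s generalizing N with
  | nil => exact subset_rfl
  | cons k s ih =>
    exact (ih ((hch N hN).isGood k)).trans (((hch N hN).box_subset k).trans sdiff_subset)

theorem core_foldl_subset (hch : IsChildChoice f A ch) (hN : N.IsGood f A) (s : List ℕ) :
    (s.foldl ch N).core ⊆ N.box :=
  (isGood_foldl hch hN s).core_subset_box.trans (box_foldl_subset hch hN s)

theorem pt_foldl_mem_box (hch : IsChildChoice f A ch) (hN : N.IsGood f A) (s : List ℕ) :
    (s.foldl ch N).pt ∈ N.box :=
  core_foldl_subset hch hN s (isGood_foldl hch hN s).pt_mem_core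

theorem injective_image_pt_foldl (hch : IsChildChoice f A ch) (hN : N.IsGood f A) :
    Injective fun s : List ℕ => f (s.foldl ch N).pt := by
  intro s t hst
  induction s generalizing N t with
  | nil =>
    cases t with
    | nil => rfl
    | cons k t =>
      exact absurd ⟨_, pt_foldl_mem_box hch ((hch N hN).isGood k) t, hst.symm⟩
        ((hch N hN).notMem_image_box k)
  | cons k s ih =>
    cases t with
    | nil =>
      exact absurd ⟨_, pt_foldl_mem_box hch ((hch N hN).isGood k) s, hst⟩
        ((hch N hN).notMem_image_box k)
    | cons l t =>
      obtain rfl | hkl := eq_or_ne k l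
      · exact congrArg _ (ih ((hch N hN).isGood k) hst)
      · have hst' : f (s.foldl ch (ch N k)).pt = f (t.foldl ch (ch N l)).pt := hst
        refine absurd ?_ (disjoint_left.mp ((hch N hN).pairwise_disjoint_image_box hkl)
          (mem_image_of_mem f (pt_foldl_mem_box hch ((hch N hN).isGood k) s)))
        exact hst' ▸ mem_image_of_mem f (pt_foldl_mem_box hch ((hch N hN).isGood l) t)

theorem pt_foldl_notMem_core (hch : IsChildChoice f A ch) (hN : N.IsGood f A) {s t : List ℕ}
    (hst : s ≠ t) : (t.foldl ch N).pt ∉ (s.foldl ch N).core := by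
  induction s generalizing N t with
  | nil =>
    cases t with
    | nil => exact absurd rfl hst
    | cons k t => exact ((hch N hN).box_subset k (pt_foldl_mem_box hch ((hch N hN).isGood k) t)).2
  | cons k s ih =>
    cases t with
    | nil =>
      exact fun h => ((hch N hN).box_subset k (core_foldl_subset hch ((hch N hN).isGood k) s h)).2
        hN.pt_mem_core
    | cons l t =>
      obtain rfl | hkl := eq_or_ne k l
      · exact ih ((hch N hN).isGood k) (fun h => hst (h ▸ rfl))
      · exact fun h => disjoint_left.mp ((hch N hN).pairwise_disjoint_image_box hkl).of_image
          (core_foldl_subset hch ((hch N hN).isGood k) s h)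
          (pt_foldl_mem_box hch ((hch N hN).isGood l) t)

theorem tendsto_pt_foldl_append (hch : IsChildChoice f A ch) (hN : N.IsGood f A) (s : List ℕ) :
    Tendsto (fun k => f ((s ++ [k]).foldl ch N).pt) atTop (𝓝 (f (s.foldl ch N).pt)) := by
  simpa only [List.foldl_append, List.foldl_cons, List.foldl_nil]
    using (hch _ (isGood_foldl hch hN s)).tendsto_pt

end Tree

theorem IsGood.exists_isChildFamily {α β : Type*} [TopologicalSpace α] [MetricSpace β]
    {f : α → β} {A : Set α} (hα : IsTopologicalBasis {s : Set α | IsClopen s})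
    (hf : Continuous f) (hA : NowhereOpenOn f A) {N : Node α} (hN : N.IsGood f A) :
    ∃ C, N.IsChildFamily f A C := by
  obtain ⟨y, V, hyV, hVo, hpV, hVd, hVlim⟩ :=
    exists_seq_pairwise_disjoint_open_tendsto_of_mem_closure hN.mem_closure fun h => h.2 ⟨N.pt, ⟨hN.pt_mem, hN.pt_mem_core⟩, rfl⟩
  have hO : ∀ k, IsOpen ((N.box \ N.core) ∩ f ⁻¹' V k) := fun k =>
    (hN.isOpen_box.sdiff hN.isClopen_core.isClosed).inter ((hVo k).preimage hf)
  have hAO : ∀ k, (A ∩ ((N.box \ N.core) ∩ f ⁻¹' V k)).Nonempty := by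
    intro k
    obtain ⟨⟨⟨x, ⟨hxA, hxB⟩, hxy⟩, hxc⟩, hyV⟩ := hyV k
    exact ⟨x, hxA, ⟨hxB, fun hx => hxc ⟨x, ⟨hxA, hx⟩, hxy⟩⟩, show f x ∈ V k from hxy ▸ hyV⟩
  choose C hC hCbox using fun k => Node.exists_isGood hα hA (hO k) (hAO k)
  have himage : ∀ k, f '' (C k).box ⊆ V k := fun k => by
    rw [hCbox k]
    exact image_subset_iff.mpr inter_subset_right
  have hpt : ∀ k, (C k).pt ∈ (C k).box := fun k => (hC k).core_subset_box (hC k).pt_mem_core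
  exact ⟨C, hC, fun k => hCbox k ▸ inter_subset_left, fun k h => hpV k (himage k h),
    fun m n hmn => (hVd hmn).mono (himage m) (himage n),
    hVlim.of_smallSets (Eventually.of_forall fun k => himage k (mem_image_of_mem f (hpt k)))⟩

theorem exists_isChildChoice {α β : Type*} [TopologicalSpace α] [MetricSpace β] {f : α → β}
    {A : Set α} (hα : IsTopologicalBasis {s : Set α | IsClopen s}) (hf : Continuous f)
    (hA : NowhereOpenOn f A) : ∃ ch, IsChildChoice f A ch := by
  have hchildren : ∀ M : Node α, ∃ C, M.IsGood f A → M.IsChildFamily f A C := fun M => by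
    by_cases hM : M.IsGood f A
    · exact (hM.exists_isChildFamily hα hf hA).imp fun _ hC _ => hC
    · exact ⟨fun _ => M, fun h => absurd h hM⟩
  choose ch hch using hchildren
  exact ⟨ch, hch⟩

end Node

theorem exists_isDiscreteSubset_not_resolvable {α β : Type*} [TopologicalSpace α] [MetricSpace β]
    {f : α → β} {A : Set α} (hα : IsTopologicalBasis {s : Set α | IsClopen s})
    (hf : Continuous f) (hA : NowhereOpenOn f A) (hAne : A.Nonempty) :
    ∃ D, IsDiscreteSubset D ∧ ¬ Resolvable (f '' D) := by
  obtain ⟨N, hN, -⟩ := Node.exists_isGood hα hA isOpen_univ (by rwa [inter_univ])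
  obtain ⟨ch, hch⟩ := Node.exists_isChildChoice hα hf hA
  let x : List ℕ → α := fun s => (s.foldl ch N).pt
  have hinj : Injective (f ∘ x) := Node.injective_image_pt_foldl hch hN
  have hchild (r : ℕ) (s : List ℕ) :
      Tendsto (fun k => f (x (s ++ [2 * k + r]))) atTop (𝓝 (f (x s))) :=
    (Node.tendsto_pt_foldl_append hch hN s).comp
      ((tendsto_add_atTop_nat r).comp (tendsto_id.const_mul_atTop' two_pos))
  refine ⟨range fun p : List ℕ × ℕ => x (p.1 ++ [2 * p.2]), ?_, ?_⟩
  · refine (isDiscreteSubset_range (fun s => (Node.isGood_foldl hch hN s).isClopen_core.isOpen)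
      (fun s => (Node.isGood_foldl hch hN s).pt_mem_core)
      (fun s t hst => Node.pt_foldl_notMem_core hch hN hst)).mono ?_
    exact range_subset_iff.mpr fun p => mem_range_self _
  refine not_resolvable_of_subset_closure_inter_diff (T := range (f ∘ x)) ⟨_, mem_range_self []⟩
    ?_ ?_ <;> rintro _ ⟨s, rfl⟩
  · refine mem_closure_of_tendsto (hchild 0 s) (Eventually.of_forall fun k => ?_)
    exact ⟨mem_range_self _, mem_image_of_mem f (mem_range_self (s, k))⟩
  · refine mem_closure_of_tendsto (hchild 1 s) (Eventually.of_forall fun k => ?_)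
    refine ⟨mem_range_self _, ?_⟩
    rintro ⟨_, ⟨⟨t, l⟩, rfl⟩, h⟩
    have := (List.append_inj' (hinj h) rfl).2
    simp only [List.cons.injEq, and_true] at this
    omega

theorem isTopologicalBasis_isClopen_of_isInducing {α γ : Type*} [TopologicalSpace α]
    [TopologicalSpace γ] {g : α → γ} (hg : IsInducing g)
    (h : IsTopologicalBasis {s : Set γ | IsClopen s}) :
    IsTopologicalBasis {s : Set α | IsClopen s} :=
  (h.isInducing hg).of_isOpen_of_subset (fun _ hs => hs.isOpen)
    (by rintro _ ⟨s, hs, rfl⟩; exact hs.preimage hg.continuous)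

theorem exists_nat_clopen_basis {α : Type*} [TopologicalSpace α] [SecondCountableTopology α]
    (hα : IsTopologicalBasis {s : Set α | IsClopen s}) :
    ∃ B : ℕ → Set α, (∀ n, IsClopen (B n)) ∧
      ∀ x U, IsOpen U → x ∈ U → ∃ n, x ∈ B n ∧ B n ⊆ U := by
  obtain ⟨b, hb, hbc, hbasis⟩ := hα.exists_countable
  obtain ⟨B, hB⟩ := (hbc.insert ∅).exists_eq_range (insert_nonempty _ _)
  refine ⟨B, fun n => ?_, fun x U hU hxU => ?_⟩
  · rcases (hB ▸ mem_range_self n : B n ∈ insert ∅ b) with h | h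
    exacts [h ▸ isClopen_empty, hb h]
  · obtain ⟨v, hv, hxv, hvU⟩ := hbasis.exists_subset_of_mem_open hxU hU
    obtain ⟨n, rfl⟩ : v ∈ range B := hB ▸ mem_insert_of_mem _ hv
    exact ⟨n, hxv, hvU⟩

theorem discrete_resolvable_implies_piecewise_open
    (X Y : Set Cantor) (f : X → Y) (hf : Continuous f)
    (hres : ∀ D : Set X, IsDiscreteSubset D → Resolvable (f '' D)) :
    ∃ C : ℕ → Set X,
      (∀ n, IsClosed (C n)) ∧
      Pairwise (Function.onFun Disjoint C) ∧
      (⋃ n, C n) = univ ∧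
      ∀ n, OpenOntoImage f (C n) := by
  let := metrizableSpaceMetric Y
  have hX : IsTopologicalBasis {s : Set X | IsClopen s} :=
    isTopologicalBasis_isClopen_of_isInducing IsInducing.subtypeVal isTopologicalBasis_isClopen
  obtain ⟨B, hB, hbasis⟩ := exists_nat_clopen_basis hX
  rcases piecewiseOpenOn_univ_or_exists_nowhereOpenOn (f := f) hB hbasis with h | ⟨A, hAne, hA⟩
  · exact h
  · obtain ⟨D, hD, hnot⟩ := exists_isDiscreteSubset_not_resolvable hX hf hA hAne
    exact absurd (hres D hD) hnot
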